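/- arXiv:2304.05467 — 6 statements merged into one kernel-verified Lean document; each statement's English description precedes it below -/
import Mathlib

section
/- Let a > 0 and b be real numbers and let x, z be complex numbers. Then the symmetric truncated integrals ∫_{-B}^{B} (x·(iω) + x·a + z·b) / ((iω)² + 2a·(iω) + a² + b²) dω converge to π·x as B → ∞. -/
/-!
The denominator factors as `(iω + w)(iω + conj w)` with `w = a + ib`, and partial fractions
turn the integrand into `(x + iz)/2 · (iω + w)⁻¹ + (x - iz)/2 · (iω + conj w)⁻¹`. For
`Re w > 0` the real part of `(iω + w)⁻¹` integrates to a difference of arctangents, which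
tends to `π`. Its imaginary part integrates to `½ log (a² + t²)` evaluated at `Im w ± B`;
this difference tends to `0` only because the truncation is symmetric. So each term
contributes `π` times its coefficient, and the coefficients add up to `x`.
-/

open Filter Topology Complex intervalIntegral

section RealIntegrals

variable {a : ℝ}

theorem integral_self_div_sq_add_sq (ha : a ≠ 0) (u v : ℝ) :
    ∫ t in u..v, t / (a ^ 2 + t ^ 2) =
      (Real.log (a ^ 2 + v ^ 2) - Real.log (a ^ 2 + u ^ 2)) / 2 := by
  rw [sub_div]
  refine integral_eq_sub_of_hasDerivAt (f := fun t => Real.log (a ^ 2 + t ^ 2) / 2)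
    (fun t _ => ?_) ?_
  · have hsq : HasDerivAt (fun t => a ^ 2 + t ^ 2) (2 * t) t := by
      simpa using ((hasDerivAt_id t).pow 2).const_add (a ^ 2)
    refine ((hsq.log (by positivity)).div_const 2).congr_deriv ?_
    ring
  · exact (continuous_id.div (by fun_prop) fun t => by positivity).intervalIntegrable _ _

theorem tendsto_arctan_div_sub_arctan_div (ha : 0 < a) (c : ℝ) :
    Tendsto (fun B => Real.arctan ((B + c) / a) - Real.arctan ((-B + c) / a)) atTop
      (𝓝 Real.pi) := by
  have hup : Tendsto (fun B : ℝ => (B + c) / a) atTop atTop :=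
    (tendsto_atTop_add_const_right _ c tendsto_id).atTop_div_const ha
  have hdown : Tendsto (fun B : ℝ => (-B + c) / a) atTop atBot :=
    (tendsto_atBot_add_const_right _ c tendsto_neg_atTop_atBot).atBot_div_const ha
  have h := ((Real.tendsto_arctan_atTop.mono_right nhdsWithin_le_nhds).comp hup).sub
    ((Real.tendsto_arctan_atBot.mono_right nhdsWithin_le_nhds).comp hdown)
  rwa [sub_neg_eq_add, add_halves] at h

theorem tendsto_log_sq_add_sq_sub_log_sq_add_sq (ha : a ≠ 0) (c : ℝ) :
    Tendsto (fun B => Real.log (a ^ 2 + (B + c) ^ 2) - Real.log (a ^ 2 + (-B + c) ^ 2)) atTop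
      (𝓝 0) := by
  set r : ℝ → ℝ := fun s =>
    (a ^ 2 * s ^ 2 + (1 + c * s) ^ 2) / (a ^ 2 * s ^ 2 + (c * s - 1) ^ 2)
  have hat0 : Tendsto r (𝓝 0) (𝓝 1) := by
    have : ContinuousAt r 0 := by fun_prop (disch := norm_num)
    simpa [r] using this.tendsto
  have hratio :
      Tendsto (fun B => (a ^ 2 + (B + c) ^ 2) / (a ^ 2 + (-B + c) ^ 2)) atTop (𝓝 1) := by
    refine (hat0.comp tendsto_inv_atTop_zero).congr' ?_
    filter_upwards [eventually_ne_atTop 0] with B hB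
    simp only [Function.comp_apply, r]
    field_simp
    ring
  have := (Real.continuousAt_log one_ne_zero).tendsto.comp hratio
  rw [Real.log_one] at this
  refine this.congr fun B => ?_
  exact Real.log_div (by positivity) (by positivity)

end RealIntegrals

theorem Complex.inv_ofReal_add_I_mul (a t : ℝ) :
    ((a : ℂ) + I * t)⁻¹ = ↑(a / (a ^ 2 + t ^ 2)) - I * ↑(t / (a ^ 2 + t ^ 2)) := by
  apply Complex.ext <;>
    simp only [sub_re, sub_im, mul_re, mul_im, add_re, add_im, ofReal_re, ofReal_im, I_re, I_im,
      inv_re, inv_im, normSq_apply] <;> ring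

theorem integral_inv_ofReal_add_I_mul {a : ℝ} (ha : a ≠ 0) (u v : ℝ) :
    ∫ t in u..v, ((a : ℂ) + I * t)⁻¹ =
      ↑(Real.arctan (v / a) - Real.arctan (u / a)) -
        I * ↑((Real.log (a ^ 2 + v ^ 2) - Real.log (a ^ 2 + u ^ 2)) / 2) := by
  have hcont {f : ℝ → ℝ} (hf : Continuous f) : Continuous fun t => f t / (a ^ 2 + t ^ 2) :=
    hf.div (by fun_prop) fun t => by positivity
  simp_rw [inv_ofReal_add_I_mul]
  rw [integral_sub, integral_const_mul, integral_ofReal, integral_ofReal, integral_div_sq_add_sq,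
    integral_self_div_sq_add_sq ha]
  · exact (continuous_ofReal.comp (hcont continuous_const)).intervalIntegrable _ _
  · exact (continuous_const.mul
      (continuous_ofReal.comp (hcont continuous_id))).intervalIntegrable _ _

theorem Complex.I_mul_ofReal_add_ne_zero {w : ℂ} (hw : w.re ≠ 0) (t : ℝ) : I * t + w ≠ 0 :=
  fun h => hw (by simpa using congrArg re h)

theorem tendsto_integral_inv_I_mul_add {w : ℂ} (hw : 0 < w.re) :
    Tendsto (fun B : ℝ => ∫ ω in (-B)..B, (I * ω + w)⁻¹) atTop (𝓝 Real.pi) := by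
  have hshift (B : ℝ) : ∫ ω in (-B)..B, (I * ω + w)⁻¹ =
      ∫ t in (-B + w.im)..(B + w.im), ((w.re : ℂ) + I * t)⁻¹ := by
    rw [← integral_comp_add_right]
    congr! 2 with ω
    conv_lhs => rw [← re_add_im w]
    push_cast
    ring
  simp_rw [hshift, integral_inv_ofReal_add_I_mul hw.ne']
  have h := ((continuous_ofReal.tendsto _).comp (tendsto_arctan_div_sub_arctan_div hw w.im)).sub
    (((continuous_ofReal.tendsto _).comp
      ((tendsto_log_sq_add_sq_sub_log_sq_add_sq hw.ne' w.im).div_const 2)).const_mul I)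
  simpa using h

theorem Complex.div_quadratic_eq_inv_add_inv {s a b x z : ℂ} (h₁ : s + (a + I * b) ≠ 0)
    (h₂ : s + (a - I * b) ≠ 0) :
    (x * s + x * a + z * b) / (s ^ 2 + 2 * a * s + a ^ 2 + b ^ 2) =
      (x + I * z) / 2 * (s + (a + I * b))⁻¹ + (x - I * z) / 2 * (s + (a - I * b))⁻¹ := by
  rw [show s ^ 2 + 2 * a * s + a ^ 2 + b ^ 2 = (s + (a + I * b)) * (s + (a - I * b)) by
    linear_combination b ^ 2 * I_sq]
  rw [← div_eq_mul_inv, ← div_eq_mul_inv, div_add_div _ _ h₁ h₂]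
  congr 1
  linear_combination b * z * I_sq

theorem summand_truncated_integral_tendsto_pi_smul (a b : ℝ) (ha : 0 < a) (x z : ℂ) :
    Filter.Tendsto
      (fun B : ℝ => ∫ ω : ℝ in (-B)..B,
        (x * (Complex.I * ω) + x * a + z * b) /
          ((Complex.I * ω) ^ 2 + 2 * a * (Complex.I * ω) + (a : ℂ) ^ 2 + (b : ℂ) ^ 2))
      Filter.atTop (nhds ((Real.pi : ℂ) * x)) := by
  have hre₁ : 0 < ((a : ℂ) + I * b).re := by simpa using ha
  have hre₂ : 0 < ((a : ℂ) - I * b).re := by simpa using ha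
  have hint {w : ℂ} (hw : 0 < w.re) (B : ℝ) :
      IntervalIntegrable (fun ω : ℝ => (I * ω + w)⁻¹) MeasureTheory.volume (-B) B :=
    (Continuous.inv₀ (by fun_prop) (I_mul_ofReal_add_ne_zero hw.ne')).intervalIntegrable _ _
  have hsplit (ω : ℝ) := Complex.div_quadratic_eq_inv_add_inv (x := x) (z := z)
    (I_mul_ofReal_add_ne_zero hre₁.ne' ω) (I_mul_ofReal_add_ne_zero hre₂.ne' ω)
  simp_rw [hsplit]
  have h := ((tendsto_integral_inv_I_mul_add hre₁).const_mul ((x + I * z) / 2)).add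
    ((tendsto_integral_inv_I_mul_add hre₂).const_mul ((x - I * z) / 2))
  convert h using 2 with B
  · rw [integral_add ((hint hre₁ B).const_mul _) ((hint hre₂ B).const_mul _),
      integral_const_mul, integral_const_mul]
  · ring
end

section
/- Let n be a finite index type, let a > 0 and b be real numbers, and let X, Z be n×n real matrices viewed as complex matrices. Then the entrywise symmetric truncated matrix integrals ∫_{-B}^{B} ((iω + a)² + b²)⁻¹ · ((iω + a)·X + b·Z) dω converge entrywise to π·X as B → ∞. -/
/-!
With `s = iω + a`, the entry is `(s X + b Z) / (s² + b²)`, and `s² + b² = (s - ib)(s + ib)` gives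
the partial fractions `(X - iZ)/2 · (i(ω - b) + a)⁻¹ + (X + iZ)/2 · (i(ω + b) + a)⁻¹`.
The function `u ↦ (iu + a)⁻¹` is not integrable on `ℝ`, but it has the explicit antiderivative
`arctan (u / a) - (i/2) log (a² + u²)`: over `[-B - c, B - c]` the arctangent part tends to `π`
and the logarithmic part to `0`. Hence the integral tends to `((X - iZ)/2 + (X + iZ)/2) π = π X`.
-/

open Filter Topology Real intervalIntegral
open Complex (I ofReal ofReal_zero continuous_ofReal I_sq re)

lemma I_mul_add_ne_zero {a : ℝ} (ha : a ≠ 0) (u : ℝ) : I * u + a ≠ 0 := fun h =>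
  ha (by simpa using congrArg re h)

lemma continuous_inv_I_mul_add {a : ℝ} (ha : a ≠ 0) : Continuous fun u : ℝ => (I * u + a)⁻¹ :=
  (by fun_prop : Continuous fun u : ℝ => I * u + a).inv₀ (I_mul_add_ne_zero ha)

lemma hasDerivAt_arctan_sub_I_mul_log {a : ℝ} (ha : a ≠ 0) (u : ℝ) :
    HasDerivAt (fun u : ℝ => (arctan (u / a) : ℂ) - I * (Real.log (a ^ 2 + u ^ 2) / 2 : ℝ))
      (I * u + a)⁻¹ u := by
  have hpos : 0 < a ^ 2 + u ^ 2 := by positivity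
  have harctan := ((hasDerivAt_id u).div_const a).arctan
  have hlog := (((hasDerivAt_id u).pow 2).const_add (a ^ 2)).log hpos.ne' |>.div_const 2
  refine (harctan.ofReal_comp.sub (hlog.ofReal_comp.const_mul I)).congr_deriv ?_
  have hne := I_mul_add_ne_zero ha u
  have hne' : (a : ℂ) ^ 2 + (u : ℂ) ^ 2 ≠ 0 := by exact_mod_cast hpos.ne'
  have ha' : (a : ℂ) ≠ 0 := by exact_mod_cast ha
  simp only [id, Pi.pow_apply]
  push_cast
  field_simp
  rw [eq_div_iff (by rwa [mul_comm])]
  linear_combination -(u : ℂ) ^ 2 * I_sq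

lemma integral_inv_I_mul_add {a : ℝ} (ha : a ≠ 0) (x y : ℝ) :
    ∫ u in x..y, (I * u + a)⁻¹ = (arctan (y / a) - arctan (x / a) : ℝ)
      - I * ((Real.log (a ^ 2 + y ^ 2) - Real.log (a ^ 2 + x ^ 2)) / 2 : ℝ) := by
  rw [integral_eq_sub_of_hasDerivAt (fun u _ => hasDerivAt_arctan_sub_I_mul_log ha u)
    ((continuous_inv_I_mul_add ha).intervalIntegrable x y)]
  push_cast
  ring

lemma tendsto_log_sq_add_sq_sub_two_mul_log (a : ℝ) :
    Tendsto (fun t => Real.log (a ^ 2 + t ^ 2) - 2 * Real.log t) atTop (𝓝 0) := by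
  have h : Tendsto (fun t => Real.log ((a / t) ^ 2 + 1)) atTop (𝓝 0) := by
    simpa using ((tendsto_const_nhds.div_atTop tendsto_id).pow 2 |>.add_const 1).log
      (by norm_num : ((0:ℝ) ^ 2 + 1) ≠ 0)
  refine h.congr' ?_
  filter_upwards [eventually_gt_atTop 0] with t ht
  rw [show 2 * Real.log t = Real.log (t ^ 2) by simp [Real.log_pow],
    ← Real.log_div (by positivity) (by positivity)]
  congr 1
  field_simp

lemma tendsto_log_sq_add_sq_comp_add_sub (a c : ℝ) :
    Tendsto (fun t => Real.log (a ^ 2 + (t + c) ^ 2) - Real.log (a ^ 2 + t ^ 2)) atTop (𝓝 0) := by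
  have hlog := tendsto_log_sq_add_sq_sub_two_mul_log a
  have h := ((hlog.comp (tendsto_atTop_add_const_right _ c tendsto_id)).sub hlog).add
    ((tendsto_log_comp_add_sub_log c).const_mul 2)
  simp only [sub_self, mul_zero, add_zero] at h
  refine h.congr fun t => ?_
  simp only [Function.comp_apply, id]
  ring

lemma tendsto_integral_inv_I_mul_sub_add {a : ℝ} (ha : 0 < a) (c : ℝ) :
    Tendsto (fun B : ℝ => ∫ ω in (-B)..B, (I * ((ω - c : ℝ) : ℂ) + a)⁻¹) atTop (𝓝 π) := by
  have hB : Tendsto (fun B : ℝ => B - c) atTop atTop := tendsto_atTop_add_const_right _ _ tendsto_id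
  have hB' : Tendsto (fun B : ℝ => -B - c) atTop atBot :=
    tendsto_atBot_add_const_right _ _ tendsto_neg_atTop_atBot
  have harctan : Tendsto (fun B => arctan ((B - c) / a) - arctan ((-B - c) / a)) atTop (𝓝 π) := by
    have hup := (tendsto_arctan_atTop.mono_right nhdsWithin_le_nhds).comp (hB.atTop_div_const ha)
    have hdown := (tendsto_arctan_atBot.mono_right nhdsWithin_le_nhds).comp (hB'.atBot_div_const ha)
    have h := hup.sub hdown
    rwa [sub_neg_eq_add, add_halves] at h
  have hlog : Tendsto
      (fun B => (Real.log (a ^ 2 + (B - c) ^ 2) - Real.log (a ^ 2 + (-B - c) ^ 2)) / 2)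
      atTop (𝓝 0) := by
    have h := ((tendsto_log_sq_add_sq_comp_add_sub a (2 * c)).comp hB).neg.div_const 2
    rw [neg_zero, zero_div] at h
    refine h.congr fun B => ?_
    simp only [Function.comp_apply]
    ring_nf
  have h := ((continuous_ofReal.tendsto _).comp harctan).sub
    (((continuous_ofReal.tendsto _).comp hlog).const_mul I)
  rw [ofReal_zero, mul_zero, sub_zero] at h
  simpa only [integral_comp_sub_right (fun u : ℝ => (I * u + a)⁻¹), integral_inv_I_mul_add ha.ne',
    Function.comp_apply] using h

lemma inv_sq_add_sq_mul_eq (s b x z : ℂ) (h₁ : s - I * b ≠ 0) (h₂ : s + I * b ≠ 0) :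
    (s ^ 2 + b ^ 2)⁻¹ * (s * x + b * z)
      = (x - I * z) / 2 * (s - I * b)⁻¹ + (x + I * z) / 2 * (s + I * b)⁻¹ := by
  have hfac : s ^ 2 + b ^ 2 = (s - I * b) * (s + I * b) := by linear_combination b ^ 2 * I_sq
  rw [hfac]
  field_simp
  linear_combination (2 * b * z) * I_sq

open Matrix

theorem matrix_summand_truncated_integral_tendsto_pi_smul_general
    {n : Type*} (a b : ℝ) (ha : 0 < a) (X Z : Matrix n n ℝ) (i j : n) :
    Filter.Tendsto
      (fun B : ℝ => ∫ ω : ℝ in (-B)..B,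
        ((((Complex.I * ω + a) ^ 2 + (b : ℂ) ^ 2)⁻¹ •
          ((Complex.I * ω + a) • (X.map Complex.ofReal) +
            (b : ℂ) • (Z.map Complex.ofReal))) i j))
      Filter.atTop (nhds (((Real.pi : ℂ) • (X.map Complex.ofReal)) i j)) := by
  simp only [Matrix.smul_apply, Matrix.add_apply, Matrix.map_apply, smul_eq_mul]
  set x : ℂ := (X i j : ℂ)
  set z : ℂ := (Z i j : ℂ)
  have hlim := ((tendsto_integral_inv_I_mul_sub_add ha b).const_mul ((x - I * z) / 2)).add
    ((tendsto_integral_inv_I_mul_sub_add ha (-b)).const_mul ((x + I * z) / 2))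
  rw [show (x - I * z) / 2 * π + (x + I * z) / 2 * π = π * x by ring] at hlim
  refine hlim.congr fun B => ?_
  have hint (c : ℝ) : IntervalIntegrable (fun ω : ℝ => (I * ((ω - c : ℝ) : ℂ) + a)⁻¹)
      MeasureTheory.volume (-B) B :=
    ((continuous_inv_I_mul_add ha.ne').comp (continuous_sub_right c)).intervalIntegrable _ _
  rw [← integral_const_mul, ← integral_const_mul,
    ← integral_add ((hint b).const_mul _) ((hint (-b)).const_mul _)]
  refine integral_congr fun ω _ => ?_
  have hminus : I * ((ω - b : ℝ) : ℂ) + a = I * ω + a - I * b := by push_cast; ring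
  have hplus : I * ((ω - -b : ℝ) : ℂ) + a = I * ω + a + I * b := by push_cast; ring
  have hne := I_mul_add_ne_zero ha.ne'
  rw [inv_sq_add_sq_mul_eq _ _ _ _ (hminus ▸ hne _) (hplus ▸ hne _), hminus, hplus]

theorem matrix_summand_truncated_integral_tendsto_pi_smul
    {n : Type*} [Fintype n] (a b : ℝ) (ha : 0 < a) (X Z : Matrix n n ℝ) (i j : n) :
    Filter.Tendsto
      (fun B : ℝ => ∫ ω : ℝ in (-B)..B,
        ((((Complex.I * ω + a) ^ 2 + (b : ℂ) ^ 2)⁻¹ •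
          ((Complex.I * ω + a) • (X.map Complex.ofReal) +
            (b : ℂ) • (Z.map Complex.ofReal))) i j))
      Filter.atTop (nhds (((Real.pi : ℂ) • (X.map Complex.ofReal)) i j)) :=
  matrix_summand_truncated_integral_tendsto_pi_smul_general a b ha X Z i j
end

section
/- Let n be a finite index type and N a natural number. For i = 1,…,N let a_i > 0 and b_i be real numbers and X_i, Z_i real n×n matrices (viewed as complex matrices). Define Ψ_Y(iω) = Σ_{i=1}^{N} ((iω + a_i)·X_i + b_i·Z_i) / ((iω + a_i)² + b_i²) and Y(iω) = Ψ_Y(iω) + Ψ_Y(iω)ᴴ, where ᴴ denotes conjugate transpose. Then the real-valued function ω ↦ Re(trace Y(iω)) is Lebesgue integrable on ℝ, and (1/(2π)) ∫_{ℝ} Re(trace Y(iω)) dω = Σ_{i=1}^{N} trace(X_i). -/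
/-!
Since trace, conjugate transpose and real part are linear, `Re tr Y(iω)` is the sum over `i` of
`2 Re (((iω + aᵢ) xᵢ + bᵢ zᵢ) / ((iω + aᵢ)² + bᵢ²))` with `xᵢ = tr Xᵢ`, `zᵢ = tr Zᵢ`. Splitting
at the poles `iω = -aᵢ ± ibᵢ`, the `x`-part is a sum of two Lorentzians (`π x` each) and the
`z`-part a difference of two shifted copies of `t / (a² + t²)`, which cancel to order `ω⁻²`.
The explicit primitive `x (arctan ((ω+b)/a) + arctan ((ω-b)/a)) + z/2 · log ((a²+(ω+b)²)/(a²+(ω-b)²))`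
is odd and tends to `π x` at `+∞`, so each term integrates to `2π x`.
-/

open Matrix MeasureTheory Filter Real Topology

/-- `2 Re (((iω + a) x + b z) / ((iω + a)² + b²))`, split into partial fractions over the
poles `iω = -a ± ib`. -/
noncomputable def secondOrderRe (a b x z ω : ℝ) : ℝ :=
  x * (a / (a ^ 2 + (ω + b) ^ 2) + a / (a ^ 2 + (ω - b) ^ 2)) +
    z * ((ω + b) / (a ^ 2 + (ω + b) ^ 2) - (ω - b) / (a ^ 2 + (ω - b) ^ 2))

noncomputable def secondOrderRePrimitive (a b x z ω : ℝ) : ℝ :=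
  x * (arctan ((ω + b) / a) + arctan ((ω - b) / a)) +
    z / 2 * (log (a ^ 2 + (ω + b) ^ 2) - log (a ^ 2 + (ω - b) ^ 2))

section SecondOrderRe

variable {a : ℝ} (b x z : ℝ)

theorem two_mul_re_inv_mul_eq_secondOrderRe (ha : a ≠ 0) (ω : ℝ) :
    2 * (((Complex.I * ω + a) ^ 2 + (b : ℂ) ^ 2)⁻¹ * ((Complex.I * ω + a) * x + b * z)).re =
      secondOrderRe a b x z ω := by
  have hp : a ^ 2 + (ω + b) ^ 2 ≠ 0 := by positivity
  have hq : a ^ 2 + (ω - b) ^ 2 ≠ 0 := by positivity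
  have hnormSq : Complex.normSq ((Complex.I * ω + a) ^ 2 + (b : ℂ) ^ 2) =
      (a ^ 2 + (ω + b) ^ 2) * (a ^ 2 + (ω - b) ^ 2) := by
    simp only [Complex.normSq_apply, Complex.add_re, Complex.add_im, Complex.mul_re,
      Complex.mul_im, Complex.I_re, Complex.I_im, Complex.ofReal_re, Complex.ofReal_im, pow_two]
    ring
  rw [inv_mul_eq_div, Complex.div_re, hnormSq, secondOrderRe]
  simp only [Complex.add_re, Complex.add_im, Complex.mul_re, Complex.mul_im, Complex.I_re,
    Complex.I_im, Complex.ofReal_re, Complex.ofReal_im, pow_two]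
  field_simp
  ring

theorem integrable_inv_sq_add_sq (c : ℝ) (ha : a ≠ 0) :
    Integrable fun ω : ℝ => (a ^ 2 + (ω + c) ^ 2)⁻¹ := by
  have hscaled := ((integrable_inv_one_add_sq.comp_mul_left' (inv_ne_zero ha)).const_mul
    (a ^ 2)⁻¹).comp_add_right c
  refine hscaled.congr (Eventually.of_forall fun ω => ?_)
  dsimp only
  rw [← mul_inv]
  field_simp

/-- The two `z`-terms are not integrable separately; their difference decays like `ω⁻²`. -/
theorem abs_div_sub_div_le (ha : a ≠ 0) (ω : ℝ) :
    |(ω + b) / (a ^ 2 + (ω + b) ^ 2) - (ω - b) / (a ^ 2 + (ω - b) ^ 2)| ≤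
      |b| * ((a ^ 2 + (ω + b) ^ 2)⁻¹ + (a ^ 2 + (ω - b) ^ 2)⁻¹) := by
  have hp : 0 < a ^ 2 + (ω + b) ^ 2 := by positivity
  have hq : 0 < a ^ 2 + (ω - b) ^ 2 := by positivity
  have hdiff : (ω + b) / (a ^ 2 + (ω + b) ^ 2) - (ω - b) / (a ^ 2 + (ω - b) ^ 2) =
      2 * b * (a ^ 2 + b ^ 2 - ω ^ 2) / ((a ^ 2 + (ω + b) ^ 2) * (a ^ 2 + (ω - b) ^ 2)) := by
    field_simp
    ring
  have hsum : (a ^ 2 + (ω + b) ^ 2)⁻¹ + (a ^ 2 + (ω - b) ^ 2)⁻¹ =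
      ((a ^ 2 + (ω + b) ^ 2) + (a ^ 2 + (ω - b) ^ 2)) /
        ((a ^ 2 + (ω + b) ^ 2) * (a ^ 2 + (ω - b) ^ 2)) := by
    field_simp
    ring
  have hnum : |2 * b * (a ^ 2 + b ^ 2 - ω ^ 2)| ≤
      |b| * ((a ^ 2 + (ω + b) ^ 2) + (a ^ 2 + (ω - b) ^ 2)) := by
    rw [abs_mul, abs_mul, abs_two, mul_comm 2 |b|, mul_assoc]
    gcongr
    cases abs_cases (a ^ 2 + b ^ 2 - ω ^ 2) <;> nlinarith [sq_nonneg a, sq_nonneg b, sq_nonneg ω]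
  rw [hdiff, hsum, abs_div, abs_of_pos (mul_pos hp hq), mul_div_assoc']
  gcongr

theorem integrable_secondOrderRe (ha : a ≠ 0) : Integrable (secondOrderRe a b x z) := by
  have hp := integrable_inv_sq_add_sq b ha
  have hq : Integrable fun ω : ℝ => (a ^ 2 + (ω - b) ^ 2)⁻¹ := by
    simpa only [sub_eq_add_neg] using integrable_inv_sq_add_sq (-b) ha
  have hcont : Continuous fun ω : ℝ =>
      (ω + b) / (a ^ 2 + (ω + b) ^ 2) - (ω - b) / (a ^ 2 + (ω - b) ^ 2) := by
    fun_prop (disch := intro ω; positivity)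
  have hz : Integrable fun ω : ℝ =>
      (ω + b) / (a ^ 2 + (ω + b) ^ 2) - (ω - b) / (a ^ 2 + (ω - b) ^ 2) :=
    ((hp.add hq).const_mul |b|).mono' hcont.aestronglyMeasurable
      (Eventually.of_forall (abs_div_sub_div_le b ha))
  have hx : Integrable fun ω : ℝ => a / (a ^ 2 + (ω + b) ^ 2) + a / (a ^ 2 + (ω - b) ^ 2) := by
    simp only [div_eq_mul_inv]
    exact (hp.const_mul a).add (hq.const_mul a)
  exact (hx.const_mul x).add (hz.const_mul z)

theorem hasDerivAt_secondOrderRePrimitive (ha : a ≠ 0) (ω : ℝ) :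
    HasDerivAt (secondOrderRePrimitive a b x z) (secondOrderRe a b x z ω) ω := by
  have harctan (c : ℝ) : HasDerivAt (fun ω => arctan ((ω + c) / a))
      (a / (a ^ 2 + (ω + c) ^ 2)) ω := by
    have h : HasDerivAt (fun ω => (ω + c) / a) (1 / a) ω := by
      simpa using ((hasDerivAt_id ω).add_const c).div_const a
    convert h.arctan using 1
    field_simp
  have hlog (c : ℝ) : HasDerivAt (fun ω => log (a ^ 2 + (ω + c) ^ 2))
      (2 * ((ω + c) / (a ^ 2 + (ω + c) ^ 2))) ω := by
    have h : HasDerivAt (fun ω => a ^ 2 + (ω + c) ^ 2) (2 * (ω + c)) ω := by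
      simpa using (((hasDerivAt_id ω).add_const c).pow 2).const_add (a ^ 2)
    convert h.log (by positivity) using 1
    ring
  have h := ((harctan b).add (harctan (-b))).const_mul x |>.add
    (((hlog b).sub (hlog (-b))).const_mul (z / 2))
  simp only [← sub_eq_add_neg] at h
  refine h.congr_deriv ?_
  rw [secondOrderRe]
  ring

theorem secondOrderRePrimitive_neg (ω : ℝ) :
    secondOrderRePrimitive a b x z (-ω) = -secondOrderRePrimitive a b x z ω := by
  simp only [secondOrderRePrimitive]
  rw [show (-ω + b) / a = -((ω - b) / a) by ring, show (-ω - b) / a = -((ω + b) / a) by ring,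
    show (-ω + b) ^ 2 = (ω - b) ^ 2 by ring, show (-ω - b) ^ 2 = (ω + b) ^ 2 by ring,
    arctan_neg, arctan_neg]
  ring

theorem tendsto_arctan_add_div_atTop (c : ℝ) (ha : 0 < a) :
    Tendsto (fun ω => arctan ((ω + c) / a)) atTop (𝓝 (π / 2)) :=
  (tendsto_nhds_of_tendsto_nhdsWithin tendsto_arctan_atTop).comp
    ((tendsto_atTop_add_const_right atTop c tendsto_id).atTop_div_const ha)

theorem tendsto_log_sub_log_atTop (ha : a ≠ 0) :
    Tendsto (fun ω => log (a ^ 2 + (ω + b) ^ 2) - log (a ^ 2 + (ω - b) ^ 2)) atTop (𝓝 0) := by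
  open Polynomial in
  have hratio : Tendsto (fun ω => (a ^ 2 + (ω + b) ^ 2) / (a ^ 2 + (ω - b) ^ 2)) atTop (𝓝 1) := by
    let P (c : ℝ) : ℝ[X] := (X + C c) ^ 2 + C (a ^ 2)
    have hmonic (c : ℝ) : (P c).Monic := by simp only [P]; monicity!
    have hdeg (c : ℝ) : (P c).degree = 2 := by simp only [P]; compute_degree!
    have h := div_tendsto_atTop_leadingCoeff_div_of_degree_eq (P b) (P (-b))
      ((hdeg b).trans (hdeg (-b)).symm)
    rw [(hmonic b).leadingCoeff, (hmonic (-b)).leadingCoeff, div_one] at h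
    refine h.congr fun ω => ?_
    simp only [P, eval_add, eval_pow, eval_X, eval_C, ← sub_eq_add_neg]
    ring
  have hlog := ((continuousAt_log one_ne_zero).tendsto.comp hratio)
  rw [log_one] at hlog
  refine hlog.congr fun ω => ?_
  exact log_div (by positivity) (by positivity)

theorem tendsto_secondOrderRePrimitive_atTop (ha : 0 < a) :
    Tendsto (secondOrderRePrimitive a b x z) atTop (𝓝 (π * x)) := by
  have h := ((tendsto_arctan_add_div_atTop b ha).add
    (tendsto_arctan_add_div_atTop (-b) ha)).const_mul x |>.add
      ((tendsto_log_sub_log_atTop b ha.ne').const_mul (z / 2))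
  rw [show x * (π / 2 + π / 2) + z / 2 * 0 = π * x by ring] at h
  refine h.congr fun ω => ?_
  simp only [secondOrderRePrimitive, sub_eq_add_neg]

theorem tendsto_secondOrderRePrimitive_atBot (ha : 0 < a) :
    Tendsto (secondOrderRePrimitive a b x z) atBot (𝓝 (-(π * x))) := by
  have h := ((tendsto_secondOrderRePrimitive_atTop b x z ha).comp tendsto_neg_atBot_atTop).neg
  refine h.congr fun ω => ?_
  rw [Function.comp_apply, secondOrderRePrimitive_neg, neg_neg]

theorem integral_secondOrderRe (ha : 0 < a) : ∫ ω, secondOrderRe a b x z ω = 2 * π * x := by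
  rw [integral_of_hasDerivAt_of_tendsto (hasDerivAt_secondOrderRePrimitive b x z ha.ne')
    (integrable_secondOrderRe b x z ha.ne') (tendsto_secondOrderRePrimitive_atBot b x z ha)
    (tendsto_secondOrderRePrimitive_atTop b x z ha)]
  ring

end SecondOrderRe

theorem Matrix.trace_map_ofReal {n : Type*} [Fintype n] (M : Matrix n n ℝ) :
    (M.map Complex.ofReal).trace = M.trace :=
  (AddMonoidHom.map_trace Complex.ofRealHom M).symm

theorem Matrix.re_trace_add_conjTranspose {n : Type*} [Fintype n] (M : Matrix n n ℂ) :
    (M + Mᴴ).trace.re = 2 * M.trace.re := by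
  rw [trace_add, trace_conjTranspose, Complex.add_re, Complex.star_def, Complex.conj_re, two_mul]

theorem trace_Y_integrable_and_integral_eq_sum_trace
    {n : Type*} [Fintype n] (N : ℕ)
    (a b : Fin N → ℝ) (ha : ∀ i, 0 < a i)
    (X Z : Fin N → Matrix n n ℝ)
    (ΨY : ℝ → Matrix n n ℂ)
    (hΨY : ∀ ω : ℝ, ΨY ω = ∑ i : Fin N,
        ((Complex.I * ω + a i) ^ 2 + (b i : ℂ) ^ 2)⁻¹ •
          ((Complex.I * ω + a i) • (X i).map Complex.ofReal +
            (b i : ℂ) • (Z i).map Complex.ofReal))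
    (Y : ℝ → Matrix n n ℂ)
    (hY : ∀ ω : ℝ, Y ω = ΨY ω + (ΨY ω)ᴴ) :
    MeasureTheory.Integrable (fun ω : ℝ => ((Y ω).trace).re) ∧
      (1 / (2 * Real.pi)) * ∫ ω : ℝ, ((Y ω).trace).re = ∑ i : Fin N, (X i).trace := by
  have hre : (fun ω => ((Y ω).trace).re) =
      fun ω => ∑ i, secondOrderRe (a i) (b i) (X i).trace (Z i).trace ω := by
    funext ω
    rw [hY, re_trace_add_conjTranspose, hΨY, trace_sum, Complex.re_sum, Finset.mul_sum]
    refine Finset.sum_congr rfl fun i _ => ?_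
    rw [← two_mul_re_inv_mul_eq_secondOrderRe _ _ _ (ha i).ne']
    simp only [trace_smul, trace_add, trace_map_ofReal, smul_eq_mul]
  have hint (i : Fin N) := integrable_secondOrderRe (b i) (X i).trace (Z i).trace (ha i).ne'
  rw [hre, integral_finsetSum _ fun i _ => hint i, Finset.mul_sum]
  refine ⟨integrable_finsetSum _ fun i _ => hint i, Finset.sum_congr rfl fun i _ => ?_⟩
  rw [integral_secondOrderRe _ _ _ (ha i)]
  field_simp
end

section
/- Let n be a finite index type and N a natural number. For i = 1,…,N let a_i > 0 and b_i be real numbers and X_i, Z_i real n×n matrices (viewed as complex matrices). Define Ψ_Y(iω) = Σ_{i=1}^{N} ((iω + a_i)·X_i + b_i·Z_i) / ((iω + a_i)² + b_i²) and Y(iω) = Ψ_Y(iω) + Ψ_Y(iω)ᴴ. Then the real-valued function ω ↦ Re(trace Y(iω)) has bounded variation on ℝ, i.e., its total variation over all of ℝ is finite. -/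
/-!
By partial fractions, `Re (tr Y(iω))` is a finite sum of functions `ω ↦ Re (w / (iω + d))` with
`Re d > 0`. Writing `iω + d = p + is` with `s = ω + Im d` and `θ = arctan (s / p)`, one has
`Re (w / (p + is)) = (Re w · cos² θ + Im w · sin θ cos θ) / p`. As `ω` runs over `ℝ`, `θ` increases
within `(-π/2, π/2)`, so it has bounded variation, and so do `cos θ` and `sin θ` (`sin`, `cos` are
`1`-Lipschitz) and their products.
-/

open Matrix

open Set Real

section Variation

variable {α E : Type*} [LinearOrder α] [SeminormedAddCommGroup E] {f g : α → E} {s : Set α}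

theorem eVariationOn.add_le (f g : α → E) (s : Set α) :
    eVariationOn (fun x => f x + g x) s ≤ eVariationOn f s + eVariationOn g s := by
  refine iSup_le fun ⟨n, u, hu, us⟩ => ?_
  calc ∑ i ∈ Finset.range n, edist (f (u (i + 1)) + g (u (i + 1))) (f (u i) + g (u i))
      ≤ ∑ i ∈ Finset.range n,
          (edist (f (u (i + 1))) (f (u i)) + edist (g (u (i + 1))) (g (u i))) :=
        Finset.sum_le_sum fun _ _ => edist_add_add_le _ _ _ _
    _ = _ := Finset.sum_add_distrib
    _ ≤ _ := add_le_add (eVariationOn.sum_le (f := f) hu us) (eVariationOn.sum_le (f := g) hu us)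

theorem BoundedVariationOn.add (hf : BoundedVariationOn f s) (hg : BoundedVariationOn g s) :
    BoundedVariationOn (fun x => f x + g x) s :=
  ne_top_of_le_ne_top (ENNReal.add_ne_top.2 ⟨hf, hg⟩) (eVariationOn.add_le f g s)

theorem BoundedVariationOn.zero : BoundedVariationOn (0 : α → E) s := by
  rw [BoundedVariationOn, eVariationOn.constant_on (f := 0)]
  · exact ENNReal.zero_ne_top
  · exact subsingleton_singleton.anti (image_subset_iff.2 fun _ _ => rfl)

theorem BoundedVariationOn.sum {ι : Type*} (t : Finset ι) {f : ι → α → E}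
    (hf : ∀ i ∈ t, BoundedVariationOn (f i) s) :
    BoundedVariationOn (fun x => ∑ i ∈ t, f i x) s := by
  rw [← Finset.sum_fn]
  exact Finset.sum_induction f (BoundedVariationOn · s) (fun _ _ => .add) .zero hf

theorem BoundedVariationOn.const_smul {𝕜 : Type*} [SeminormedRing 𝕜] [Module 𝕜 E]
    [IsBoundedSMul 𝕜 E] (c : 𝕜) (hf : BoundedVariationOn f s) :
    BoundedVariationOn (fun x => c • f x) s :=
  (lipschitzWith_smul c).comp_boundedVariationOn hf

end Variation

theorem boundedVariationOn_re_div_I_mul_add (w d : ℂ) (hd : 0 < d.re) :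
    BoundedVariationOn (fun ω : ℝ => (w / (Complex.I * ω + d)).re) univ := by
  set θ : ℝ → ℝ := fun ω => arctan ((ω + d.im) / d.re) with hθ_def
  have hθ : BoundedVariationOn θ univ :=
    MonotoneOn.boundedVariationOn (C := π / 2)
      (fun _ _ _ _ h => arctan_mono (div_le_div_of_nonneg_right (by linarith) hd.le))
      fun _ _ => (abs_lt.2 ⟨neg_pi_div_two_lt_arctan _, arctan_lt_pi_div_two _⟩).le
  have hcos := lipschitzWith_cos.comp_boundedVariationOn hθ
  have hsin := lipschitzWith_sin.comp_boundedVariationOn hθ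
  have key : ∀ ω : ℝ, (w / (Complex.I * ω + d)).re =
      d.re⁻¹ * (w.re * (cos (θ ω) * cos (θ ω)) + w.im * (sin (θ ω) * cos (θ ω))) := by
    intro ω
    set x := (ω + d.im) / d.re with hx
    have hcos_sq : cos (arctan x) * cos (arctan x) = 1 / (1 + x ^ 2) := by
      rw [← sq, cos_sq_arctan]
    have hsin : sin (arctan x) = x * cos (arctan x) := by
      rw [sin_arctan, cos_arctan]
      ring
    have hre : (Complex.I * ω + d).re = d.re := by simp
    have him : (Complex.I * ω + d).im = ω + d.im := by simp
    rw [hθ_def, hsin, mul_assoc, hcos_sq, Complex.div_re, Complex.normSq_apply, hre, him, hx]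
    field_simp
  simp_rw [key]
  simpa only [smul_eq_mul, Function.comp_apply] using
    (((hcos.fun_mul hcos).const_smul w.re).add ((hsin.fun_mul hcos).const_smul w.im)).const_smul
      d.re⁻¹

theorem inv_sq_add_sq_mul_eq_div_add_div (u b x z : ℂ) (h₁ : u + Complex.I * b ≠ 0)
    (h₂ : u - Complex.I * b ≠ 0) :
    (u ^ 2 + b ^ 2)⁻¹ * (u * x + b * z) =
      (x + Complex.I * z) / 2 / (u + Complex.I * b) +
        (x - Complex.I * z) / 2 / (u - Complex.I * b) := by
  have hfac : u ^ 2 + b ^ 2 = (u + Complex.I * b) * (u - Complex.I * b) := by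
    linear_combination b ^ 2 * Complex.I_sq
  rw [hfac]
  field_simp
  linear_combination 2 * b * z * Complex.I_sq

theorem boundedVariationOn_re_inv_sq_add_sq_mul {a : ℝ} (ha : 0 < a) (b x z : ℝ) :
    BoundedVariationOn (fun ω : ℝ => (((Complex.I * ω + a) ^ 2 + (b : ℂ) ^ 2)⁻¹ *
      ((Complex.I * ω + a) * x + b * z)).re) univ := by
  have hne (ω : ℝ) (c : ℂ) (hc : c.re = 0) : Complex.I * ω + a + c ≠ 0 := fun h => by
    simpa [hc, ha.ne'] using congrArg Complex.re h
  have hpf (ω : ℝ) : (((Complex.I * ω + a) ^ 2 + (b : ℂ) ^ 2)⁻¹ *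
      ((Complex.I * ω + a) * x + b * z)).re =
        ((x + Complex.I * z) / 2 / (Complex.I * ω + (a + Complex.I * b))).re +
          ((x - Complex.I * z) / 2 / (Complex.I * ω + (a - Complex.I * b))).re := by
    rw [inv_sq_add_sq_mul_eq_div_add_div _ _ _ _ (hne ω _ (by simp))
      (by rw [sub_eq_add_neg]; exact hne ω _ (by simp)), Complex.add_re, add_assoc, add_sub_assoc]
  simp_rw [hpf]
  exact (boundedVariationOn_re_div_I_mul_add _ _ (by simp [ha])).add
    (boundedVariationOn_re_div_I_mul_add _ _ (by simp [ha]))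

theorem trace_Y_boundedVariation
    {n : Type*} [Fintype n] (N : ℕ)
    (a b : Fin N → ℝ) (ha : ∀ i, 0 < a i)
    (X Z : Fin N → Matrix n n ℝ)
    (ΨY : ℝ → Matrix n n ℂ)
    (hΨY : ∀ ω : ℝ, ΨY ω = ∑ i : Fin N,
        ((Complex.I * ω + a i) ^ 2 + (b i : ℂ) ^ 2)⁻¹ •
          ((Complex.I * ω + a i) • (X i).map Complex.ofReal +
            (b i : ℂ) • (Z i).map Complex.ofReal))
    (Y : ℝ → Matrix n n ℂ)
    (hY : ∀ ω : ℝ, Y ω = ΨY ω + (ΨY ω)ᴴ) :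
    BoundedVariationOn (fun ω : ℝ => ((Y ω).trace).re) Set.univ := by
  have htrace_map (M : Matrix n n ℝ) : (M.map Complex.ofReal).trace = M.trace :=
    (AddMonoidHom.map_trace Complex.ofRealHom M).symm
  have hre_trace (ω : ℝ) : ((Y ω).trace).re = ∑ i, 2 * (((Complex.I * ω + a i) ^ 2 +
      (b i : ℂ) ^ 2)⁻¹ * ((Complex.I * ω + a i) * (X i).trace + b i * (Z i).trace)).re := by
    rw [hY, trace_add, trace_conjTranspose, Complex.add_re, Complex.star_def, Complex.conj_re, hΨY,
      trace_sum, Complex.re_sum, ← two_mul, Finset.mul_sum]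
    simp only [trace_smul, trace_add, htrace_map, smul_eq_mul]
  simp_rw [hre_trace]
  refine BoundedVariationOn.sum _ fun i _ => ?_
  simpa only [smul_eq_mul] using
    (boundedVariationOn_re_inv_sq_add_sq_mul (ha i) _ _ _).const_smul (2 : ℝ)
end

section
/- Let M be an n×n complex matrix. Then M + Mᴴ is positive definite if and only if I + M is invertible and the spectral norm (largest singular value) of (I − M)(I + M)⁻¹ is strictly less than 1. In other words, writing sect(M) = (I − M)(I + M)⁻¹ for the bilinear sector transformation, σ̄(sect(M)) < 1 (together with invertibility of I + M) holds exactly when M + Mᴴ ≻ 0. -/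
/-!
Let `A` be `M` acting on `ℓ²(n)`. Since `‖x + A x‖² - ‖x - A x‖² = 4 Re ⟪x, A x⟫` and
`xᴴ (M + Mᴴ) x = 2 Re ⟪x, A x⟫`, positive definiteness of `M + Mᴴ` says exactly that
`‖x - A x‖ < ‖x + A x‖` for `x ≠ 0`. This forces `1 + A` to be injective, hence invertible, and the
substitution `y = (1 + A) x` turns it into `‖sect(A) y‖ < ‖y‖` for `y ≠ 0`. In finite dimension
the operator norm is attained on the unit ball, so the latter is equivalent to `‖sect(A)‖ < 1`.
-/

open Matrix ComplexOrder

theorem norm_sub_lt_norm_add_iff_re_inner_pos {𝕜 E : Type*} [RCLike 𝕜] [NormedAddCommGroup E]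
    [InnerProductSpace 𝕜 E] (x y : E) :
    ‖x - y‖ < ‖x + y‖ ↔ 0 < RCLike.re (inner 𝕜 x y) := by
  rw [← sq_lt_sq₀ (norm_nonneg _) (norm_nonneg _), norm_sub_sq (𝕜 := 𝕜), norm_add_sq (𝕜 := 𝕜)]
  constructor <;> intro h <;> linarith

namespace ContinuousLinearMap

variable {𝕜 E F : Type*} [DenselyNormedField 𝕜] [NormedAddCommGroup E] [NormedSpace 𝕜 E]
  [ProperSpace E] [SeminormedAddCommGroup F] [NormedSpace 𝕜 F]

theorem exists_mem_closedBall_norm_apply_eq_opNorm (f : E →L[𝕜] F) :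
    ∃ x ∈ Metric.closedBall (0 : E) 1, ‖f x‖ = ‖f‖ := by
  have hK : IsCompact ((fun x => ‖f x‖) '' Metric.closedBall (0 : E) 1) :=
    (isCompact_closedBall 0 1).image (by fun_prop)
  simpa [f.sSup_unitClosedBall_eq_norm] using
    hK.sSup_mem ((Metric.nonempty_closedBall.2 zero_le_one).image _)

theorem opNorm_lt_one_iff (f : E →L[𝕜] F) : ‖f‖ < 1 ↔ ∀ x ≠ 0, ‖f x‖ < ‖x‖ := by
  refine ⟨fun hf x hx => ?_, fun hf => ?_⟩
  · calc ‖f x‖ ≤ ‖f‖ * ‖x‖ := f.le_opNorm x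
      _ < 1 * ‖x‖ := by gcongr
      _ = ‖x‖ := one_mul _
  · obtain ⟨x, hx, hfx⟩ := f.exists_mem_closedBall_norm_apply_eq_opNorm
    rcases eq_or_ne x 0 with rfl | hx0
    · simp [← hfx]
    · rw [← hfx]
      exact (hf x hx0).trans_le (mem_closedBall_zero_iff.1 hx)

theorem opNorm_lt_one_iff_of_bijective {G : Type*} [SeminormedAddCommGroup G] [NormedSpace 𝕜 G]
    (f : E →L[𝕜] F) {g : G →L[𝕜] E} (hg : Function.Bijective g) :
    ‖f‖ < 1 ↔ ∀ x ≠ 0, ‖f (g x)‖ < ‖g x‖ := by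
  rw [opNorm_lt_one_iff, hg.surjective.forall]
  simp only [hg.injective.ne_iff' (map_zero g)]

end ContinuousLinearMap

theorem bijective_one_add_of_forall_norm_sub_lt_norm_add {𝕜 E : Type*} [NormedField 𝕜]
    [NormedAddCommGroup E] [NormedSpace 𝕜 E] [FiniteDimensional 𝕜 E]
    {A : E →L[𝕜] E} (hA : ∀ x ≠ 0, ‖x - A x‖ < ‖x + A x‖) : Function.Bijective ⇑(1 + A) := by
  have hinj : Function.Injective ⇑(1 + A) := by
    refine (injective_iff_map_eq_zero _).2 fun x hx => ?_
    by_contra hx0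
    have := hA x hx0
    rw [show x + A x = 0 from hx, norm_zero] at this
    exact (norm_nonneg _).not_gt this
  exact ⟨hinj, LinearMap.injective_iff_surjective.1 hinj⟩

namespace Matrix

variable {𝕜 n : Type*} [RCLike 𝕜] [Fintype n]

theorem star_dotProduct_add_conjTranspose_mulVec (M : Matrix n n 𝕜) (x : n → 𝕜) :
    star x ⬝ᵥ (M + Mᴴ) *ᵥ x = (2 * RCLike.re (star x ⬝ᵥ M *ᵥ x) : ℝ) := by
  rw [add_mulVec, dotProduct_add, mulVec_conjTranspose, star_dotProduct_star, ← dotProduct_mulVec,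
    RCLike.star_def, RCLike.add_conj, RCLike.ofReal_mul, RCLike.ofReal_ofNat]

theorem posDef_add_conjTranspose_iff (M : Matrix n n 𝕜) :
    (M + Mᴴ).PosDef ↔ ∀ x : n → 𝕜, x ≠ 0 → 0 < RCLike.re (star x ⬝ᵥ M *ᵥ x) := by
  simp only [posDef_iff_dotProduct_mulVec, isHermitian_add_transpose_self, true_and,
    star_dotProduct_add_conjTranspose_mulVec, RCLike.ofReal_pos, Nat.ofNat_pos,
    mul_pos_iff_of_pos_left]

theorem posDef_add_conjTranspose_iff_re_inner_pos [DecidableEq n] (M : Matrix n n 𝕜) :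
    (M + Mᴴ).PosDef ↔ ∀ x : EuclideanSpace 𝕜 n, x ≠ 0 →
      0 < RCLike.re (inner 𝕜 x (toEuclideanCLM (𝕜 := 𝕜) M x)) := by
  rw [posDef_add_conjTranspose_iff, (WithLp.equiv 2 (n → 𝕜)).symm.forall_congr_left]
  simp [EuclideanSpace.inner_eq_star_dotProduct, dotProduct_comm]

end Matrix

theorem sect_norm_lt_one_iff_posDef
    {n : Type*} [Fintype n] [DecidableEq n] (M : Matrix n n ℂ) :
    (M + Mᴴ).PosDef ↔
      IsUnit (1 + M) ∧
        ‖Matrix.toEuclideanCLM (𝕜 := ℂ) (n := n) ((1 - M) * (1 + M)⁻¹)‖ < 1 := by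
  set A := toEuclideanCLM (𝕜 := ℂ) (n := n) M
  have isUnit_iff : IsUnit (1 + M) ↔ Function.Bijective ⇑(1 + A) := by
    rw [← ContinuousLinearMap.isUnit_iff_bijective, ← map_one (toEuclideanCLM (𝕜 := ℂ) (n := n)),
      ← map_add, isUnit_map_iff]
  have sect_apply (hM : IsUnit (1 + M)) (x : EuclideanSpace ℂ n) :
      toEuclideanCLM (𝕜 := ℂ) ((1 - M) * (1 + M)⁻¹) ((1 + A) x) = x - A x := by
    rw [← mul_apply_eq_comp, ← map_one (toEuclideanCLM (𝕜 := ℂ) (n := n)), ← map_add,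
      ← map_mul, nonsing_inv_mul_cancel_right _ _ ((isUnit_iff_isUnit_det _).1 hM), map_sub,
      map_one]
    rfl
  have norm_sect_lt_one_iff (hM : IsUnit (1 + M)) :
      ‖toEuclideanCLM (𝕜 := ℂ) (n := n) ((1 - M) * (1 + M)⁻¹)‖ < 1 ↔
        ∀ x ≠ 0, ‖x - A x‖ < ‖x + A x‖ := by
    rw [ContinuousLinearMap.opNorm_lt_one_iff_of_bijective _ (isUnit_iff.1 hM)]
    simp only [sect_apply hM]
    rfl
  rw [posDef_add_conjTranspose_iff_re_inner_pos]
  simp_rw [← norm_sub_lt_norm_add_iff_re_inner_pos]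
  refine ⟨fun hA => ?_, fun ⟨hM, hnorm⟩ => (norm_sect_lt_one_iff hM).1 hnorm⟩
  have hM := isUnit_iff.2 (bijective_one_add_of_forall_norm_sub_lt_norm_add hA)
  exact ⟨hM, (norm_sect_lt_one_iff hM).2 hA⟩
end

section
/- Let m, n, r be finite index types, and let G be an m×n, Σ an r×m, φ an n×m, and Ψ an n×n complex matrix. Define the block matrix P = [[φG + Ψ, 0], [ΣG, −(1/2)·I]] of size (n+r)×(n+r). If I − P is invertible and the spectral norm (largest singular value) of sect(−P) = (I + P)(I − P)⁻¹ is strictly less than 1, then the Hermitian matrix GᴴΣᴴΣG + Gᴴφᴴ + φG + Ψ + Ψᴴ is negative definite; in particular there exists ε > 0 such that GᴴΣᴴΣG + Gᴴφᴴ + φG + Ψ + Ψᴴ ≼ −εI. -/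
/-!
With `A = φ G + Ψ` and `B = S G`, the matrix of the frequency-domain inequality is
`A + Aᴴ + Bᴴ B`, and for `x = (w, B w)` one computes `2 Re xᴴ P x = wᴴ (A + Aᴴ + Bᴴ B) w`.
Applying the strict contraction `(I + P)(I - P)⁻¹` to `(I - P) x` gives
`‖x + P x‖ < ‖x - P x‖`, which by polarization is `Re xᴴ P x < 0`. Hence the matrix is negative
definite, and its largest eigenvalue provides the margin `ε`.
-/

open Matrix ComplexOrder

section InnerProduct

variable {𝕜 E : Type*} [RCLike 𝕜] [NormedAddCommGroup E] [InnerProductSpace 𝕜 E]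

theorem re_inner_neg_iff_norm_add_lt_norm_sub {x y : E} :
    RCLike.re (inner 𝕜 x y) < 0 ↔ ‖x + y‖ < ‖x - y‖ := by
  rw [re_inner_eq_norm_add_mul_self_sub_norm_sub_mul_self_div_four,
    mul_self_lt_mul_self_iff (norm_nonneg _) (norm_nonneg _)]
  constructor <;> intro h <;> linarith

end InnerProduct

namespace Matrix

variable {𝕜 n r : Type*} [RCLike 𝕜] [Fintype n] [Fintype r]

theorem star_dotProduct_conjTranspose_mulVec (A : Matrix r n 𝕜) (v : r → 𝕜) (w : n → 𝕜) :
    star w ⬝ᵥ (Aᴴ *ᵥ v) = star (star v ⬝ᵥ (A *ᵥ w)) := by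
  rw [star_dotProduct, star_mulVec, conjTranspose_conjTranspose, dotProduct_mulVec]

theorem IsHermitian.posDef_of_re_dotProduct_pos [DecidableEq n] {H : Matrix n n 𝕜}
    (hH : H.IsHermitian) (hpos : ∀ x : n → 𝕜, x ≠ 0 → 0 < RCLike.re (star x ⬝ᵥ (H *ᵥ x))) :
    H.PosDef := by
  refine PosDef.of_dotProduct_mulVec_pos hH fun x hx => ?_
  rw [← RCLike.re_add_im (star x ⬝ᵥ (H *ᵥ x)), hH.im_star_dotProduct_mulVec_self,
    RCLike.ofReal_zero, zero_mul, add_zero]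
  exact RCLike.ofReal_pos.mpr (hpos x hx)

theorem re_star_dotProduct_mulVec_neg_of_norm_cayley_lt_one [DecidableEq n] {Q : Matrix n n 𝕜}
    (hinv : IsUnit (1 - Q)) (hnorm : ‖toEuclideanCLM (𝕜 := 𝕜) (n := n) ((1 + Q) * (1 - Q)⁻¹)‖ < 1)
    {x : n → 𝕜} (hx : x ≠ 0) : RCLike.re (star x ⬝ᵥ (Q *ᵥ x)) < 0 := by
  set C := toEuclideanCLM (𝕜 := 𝕜) (n := n) ((1 + Q) * (1 - Q)⁻¹)
  set u : EuclideanSpace 𝕜 n := WithLp.toLp 2 ((1 - Q) *ᵥ x)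
  have hu : u ≠ 0 := by
    simpa [u] using (mulVec_injective_of_isUnit hinv).ne hx
  have hCu : C u = WithLp.toLp 2 x + WithLp.toLp 2 (Q *ᵥ x) := by
    rw [toEuclideanCLM_toLp, mulVec_mulVec, Matrix.mul_assoc,
      nonsing_inv_mul _ ((isUnit_iff_isUnit_det _).mp hinv), Matrix.mul_one, add_mulVec,
      one_mulVec, WithLp.toLp_add]
  have hre : star x ⬝ᵥ (Q *ᵥ x) = inner 𝕜 (WithLp.toLp 2 x) (WithLp.toLp 2 (Q *ᵥ x)) := by
    rw [EuclideanSpace.inner_toLp_toLp, dotProduct_comm]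
  have hu_eq : u = WithLp.toLp 2 x - WithLp.toLp 2 (Q *ᵥ x) := by
    simp only [u, sub_mulVec, one_mulVec, WithLp.toLp_sub]
  rw [hre, re_inner_neg_iff_norm_add_lt_norm_sub, ← hu_eq, ← hCu]
  calc ‖C u‖ ≤ ‖C‖ * ‖u‖ := C.le_opNorm u
    _ < ‖u‖ := mul_lt_of_lt_one_left (norm_pos_iff.mpr hu) hnorm

theorem two_mul_re_star_dotProduct_fromBlocks_mulVec [DecidableEq r] (A : Matrix n n 𝕜)
    (B : Matrix r n 𝕜) (w : n → 𝕜) :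
    2 * RCLike.re (star (Sum.elim w (B *ᵥ w)) ⬝ᵥ
        (fromBlocks A 0 B ((-(1 / 2) : 𝕜) • 1) *ᵥ Sum.elim w (B *ᵥ w))) =
      RCLike.re (star w ⬝ᵥ ((A + Aᴴ + Bᴴ * B) *ᵥ w)) := by
  have hlhs : 2 * (star (Sum.elim w (B *ᵥ w)) ⬝ᵥ
      (fromBlocks A 0 B ((-(1 / 2) : 𝕜) • 1) *ᵥ Sum.elim w (B *ᵥ w))) =
      2 * (star w ⬝ᵥ (A *ᵥ w)) + star (B *ᵥ w) ⬝ᵥ (B *ᵥ w) := by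
    simp only [Function.star_sumElim, fromBlocks_mulVec, sumElim_dotProduct_sumElim, zero_mulVec,
      add_zero, smul_mulVec, one_mulVec, dotProduct_add, dotProduct_smul, smul_eq_mul,
      Sum.elim_comp_inl, Sum.elim_comp_inr]
    ring
  have hrhs : star w ⬝ᵥ ((A + Aᴴ + Bᴴ * B) *ᵥ w) = star w ⬝ᵥ (A *ᵥ w) +
      star (star w ⬝ᵥ (A *ᵥ w)) + star (star (B *ᵥ w) ⬝ᵥ (B *ᵥ w)) := by
    rw [add_mulVec, add_mulVec, dotProduct_add, dotProduct_add, ← mulVec_mulVec,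
      star_dotProduct_conjTranspose_mulVec, star_dotProduct_conjTranspose_mulVec]
  rw [← RCLike.ofNat_mul_re, hlhs, hrhs]
  simp only [map_add, RCLike.ofNat_mul_re, RCLike.star_def, RCLike.conj_re]
  ring

theorem PosDef.exists_pos_posSemidef_sub_smul_one [DecidableEq n] {A : Matrix n n 𝕜}
    (hA : A.PosDef) : ∃ ε : ℝ, 0 < ε ∧ (A - (ε : 𝕜) • 1).PosSemidef := by
  obtain ⟨ε, hε, hle⟩ : ∃ ε : ℝ, 0 < ε ∧ ∀ i, ε ≤ hA.1.eigenvalues i := by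
    rcases isEmpty_or_nonempty n with hn | hn
    · exact ⟨1, one_pos, isEmptyElim⟩
    · obtain ⟨i₀, hi₀⟩ := Finite.exists_min hA.1.eigenvalues
      exact ⟨_, hA.eigenvalues_pos i₀, hi₀⟩
  refine ⟨ε, hε, posSemidef_iff_isHermitian_and_spectrum_nonneg.mpr ⟨?_, ?_⟩⟩
  · exact hA.1.sub (isHermitian_one.smul (RCLike.conj_ofReal ε))
  · rw [← Algebra.algebraMap_eq_smul_one, ← spectrum.sub_singleton_eq,
      hA.1.spectrum_eq_image_range]
    rintro _ ⟨_, ⟨_, ⟨i, rfl⟩, rfl⟩, _, rfl, rfl⟩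
    exact sub_nonneg.mpr (RCLike.ofReal_le_ofReal.mpr (hle i))

end Matrix

theorem sect_condition_implies_fdi
    {m n r : Type*} [Fintype m] [Fintype n] [Fintype r]
    [DecidableEq n] [DecidableEq r]
    (G : Matrix m n ℂ) (S : Matrix r m ℂ) (φ : Matrix n m ℂ) (Ψ : Matrix n n ℂ)
    (P : Matrix (n ⊕ r) (n ⊕ r) ℂ)
    (hP : P = Matrix.fromBlocks (φ * G + Ψ) 0 (S * G) ((-(1 / 2) : ℂ) • 1))
    (hinv : IsUnit (1 - P))
    (hnorm : ‖Matrix.toEuclideanCLM (𝕜 := ℂ) (n := n ⊕ r) ((1 + P) * (1 - P)⁻¹)‖ < 1) :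
    (-(Gᴴ * Sᴴ * S * G + Gᴴ * φᴴ + φ * G + Ψ + Ψᴴ)).PosDef ∧
      ∃ ε : ℝ, 0 < ε ∧
        (((-ε : ℝ) : ℂ) • (1 : Matrix n n ℂ) -
          (Gᴴ * Sᴴ * S * G + Gᴴ * φᴴ + φ * G + Ψ + Ψᴴ)).PosSemidef := by
  subst hP
  set M := Gᴴ * Sᴴ * S * G + Gᴴ * φᴴ + φ * G + Ψ + Ψᴴ
  have hM : M = (φ * G + Ψ) + (φ * G + Ψ)ᴴ + (S * G)ᴴ * (S * G) := by
    simp only [M, conjTranspose_add, conjTranspose_mul, Matrix.mul_assoc]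
    abel
  have hneg : ∀ w : n → ℂ, w ≠ 0 → RCLike.re (star w ⬝ᵥ (M *ᵥ w)) < 0 := by
    intro w hw
    have hx : Sum.elim w ((S * G) *ᵥ w) ≠ 0 := fun h => hw (funext fun i => congrFun h (.inl i))
    have hsect := re_star_dotProduct_mulVec_neg_of_norm_cayley_lt_one hinv hnorm hx
    rw [hM, ← two_mul_re_star_dotProduct_fromBlocks_mulVec]
    linarith
  have hPD : (-M).PosDef := by
    refine IsHermitian.posDef_of_re_dotProduct_pos ?_ fun w hw => ?_
    · rw [hM]
      exact ((isHermitian_add_transpose_self _).add (isHermitian_conjTranspose_mul_self _)).neg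
    · simpa only [neg_mulVec, dotProduct_neg, map_neg, neg_pos] using hneg w hw
  obtain ⟨ε, hε, hpsd⟩ := hPD.exists_pos_posSemidef_sub_smul_one
  have hshift : ((-ε : ℝ) : ℂ) • (1 : Matrix n n ℂ) - M = -M - (ε : ℂ) • 1 := by
    rw [Complex.ofReal_neg, neg_smul]
    abel
  exact ⟨hPD, ε, hε, hshift ▸ hpsd⟩
end
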